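/- arXiv:2304.04091 — 5 statements merged into one kernel-verified Lean document; each statement's English description precedes it below -/
import Mathlib

section
/- Let μ ∈ S satisfy C(μ) = ∅ (so k*(μ) = 0). Then sup_{w ∈ Σ_{K×L}} inf_{λ ∈ Alt(μ)} Σ_{k∈[K]} Σ_{l∈[L]} w_{k,l}(μ_{k,l} − λ_{k,l})² = max_{w ∈ Σ_{K×L}} min_{k∈[K]} Σ_{l∈[M], μ_{k,l}<0} w_{k,l} μ_{k,l}², and the supremum on the left-hand side is attained by some w ∈ Σ_{K×L}. -/
open Finset Set

noncomputable section

/-- Arm `k` is feasible under model `μ`: all the first `M` subpopulation means are nonnegative. -/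
def feasible (M : ℕ) {K L : ℕ} (μ : Fin K → Fin L → ℝ) (k : Fin K) : Prop :=
  ∀ l : Fin L, (l : ℕ) < M → 0 ≤ μ k l

/-- Quality of arm `k`: the `q`-weighted average of its subpopulation means. -/
def quality {K L : ℕ} (q : Fin L → ℝ) (μ : Fin K → Fin L → ℝ) (k : Fin K) : ℝ :=
  ∑ l, q l * μ k l

/-- `isBestArm M q μ a` : `a` is the answer `k*(μ)` making `μ` a member of the class `S`.
`a = some k` means `k` is the unique best feasible arm with all constraints strictly
satisfied; `a = none` (i.e. `k*(μ) = 0`) means every arm strictly violates a constraint. -/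
def isBestArm (M : ℕ) {K L : ℕ} (q : Fin L → ℝ) (μ : Fin K → Fin L → ℝ) :
    Option (Fin K) → Prop
  | some k => (∀ l : Fin L, (l : ℕ) < M → 0 < μ k l) ∧
      (∀ j : Fin K, j ≠ k → feasible M μ j → quality q μ j < quality q μ k)
  | none => ∀ k : Fin K, ∃ l : Fin L, (l : ℕ) < M ∧ μ k l < 0

/-- The class `S` of well-separated bandit models. -/
def inS (M : ℕ) {K L : ℕ} (q : Fin L → ℝ) (μ : Fin K → Fin L → ℝ) : Prop :=
  ∃ a, isBestArm M q μ a

/-- The simplex `Σ_{K×L}` of sampling weights. -/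
def simplex (K L : ℕ) : Set (Fin K → Fin L → ℝ) :=
  {w | (∀ k l, 0 ≤ w k l) ∧ ∑ k, ∑ l, w k l = 1}

/-- The weighted squared distance `Σ_k Σ_l w_{k,l} (μ_{k,l} - λ_{k,l})²`. -/
def wDist {K L : ℕ} (w μ lam : Fin K → Fin L → ℝ) : ℝ :=
  ∑ k, ∑ l, w k l * (μ k l - lam k l) ^ 2

/-- `Alt M q μ a` : the set of models in `S` whose answer differs from `a = k*(μ)`. -/
def Alt (M : ℕ) {K L : ℕ} (q : Fin L → ℝ) (a : Option (Fin K)) :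
    Set (Fin K → Fin L → ℝ) :=
  {lam | ∃ b, isBestArm M q lam b ∧ b ≠ a}

/-- `f^opt_μ(w)` for best arm `ks = k*(μ)`. -/
def fopt (M : ℕ) {K L : ℕ} (q : Fin L → ℝ) (μ : Fin K → Fin L → ℝ) (ks : Fin K)
    (w : Fin K → Fin L → ℝ) : ℝ :=
  ⨅ k : {k : Fin K // k ≠ ks},
    sInf {v : ℝ | ∃ lam : Fin K → Fin L → ℝ,
      quality q lam ks ≤ quality q lam k.1 ∧
      (∀ l : Fin L, (l : ℕ) < M → 0 ≤ lam k.1 l) ∧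
      v = (∑ l, w ks l * (μ ks l - lam ks l) ^ 2)
            + ∑ l, w k.1 l * (μ k.1 l - lam k.1 l) ^ 2}

/-- `f^fea_μ(w)` for best arm `ks = k*(μ)`. -/
def ffea (M : ℕ) {K L : ℕ} (μ : Fin K → Fin L → ℝ) (ks : Fin K)
    (w : Fin K → Fin L → ℝ) : ℝ :=
  ⨅ l : {l : Fin L // (l : ℕ) < M}, w ks l.1 * (μ ks l.1) ^ 2

/-- `min_{k∈[K]} Σ_{l∈[M], μ_{k,l}<0} w_{k,l} μ_{k,l}²`. -/
def gInfeas (M : ℕ) {K L : ℕ} (μ : Fin K → Fin L → ℝ) (w : Fin K → Fin L → ℝ) : ℝ :=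
  ⨅ k : Fin K, ∑ l ∈ univ.filter (fun l : Fin L => (l : ℕ) < M ∧ μ k l < 0),
    w k l * (μ k l) ^ 2

/-!
If `k*(μ) = 0`, every alternative model `λ` has a best arm `k`, whose first `M` entries are
positive; each constrained entry of arm `k` with `μ_{k,l} < 0` is then moved by at least
`|μ_{k,l}|`, so `Σ w (μ - λ)² ≥ Σ_{l ∈ [M], μ_{k,l} < 0} w_{k,l} μ_{k,l}²`. Conversely,
raising the constrained entries of arm `k` of `μ` to at least `ε > 0` gives an alternative model
whose cost tends to that sum as `ε → 0`. Hence the inner infimum equals the minimum over `k` of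
these sums, which is continuous in `w`, and the supremum over the compact simplex is attained.
-/

section Simplex

lemma simplex_eq_Ici_inter (K L : ℕ) :
    simplex K L = Set.Ici 0 ∩ {w | ∑ k, ∑ l, w k l = 1} := by
  ext w
  simp [simplex, Pi.le_def]

lemma isClosed_simplex (K L : ℕ) : IsClosed (simplex K L) := by
  rw [simplex_eq_Ici_inter]
  exact isClosed_Ici.inter (isClosed_eq (by fun_prop) continuous_const)

lemma simplex_subset_Icc (K L : ℕ) : simplex K L ⊆ Set.Icc 0 1 := by
  intro w ⟨hw, hsum⟩
  refine ⟨fun k l => hw k l, fun k l => ?_⟩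
  calc w k l ≤ ∑ l', w k l' := single_le_sum (fun l' _ => hw k l') (mem_univ l)
    _ ≤ ∑ k', ∑ l', w k' l' :=
        single_le_sum (fun k' _ => sum_nonneg fun l' _ => hw k' l') (mem_univ k)
    _ = 1 := hsum

lemma isCompact_simplex (K L : ℕ) : IsCompact (simplex K L) :=
  isCompact_Icc.of_isClosed_subset (isClosed_simplex K L) (simplex_subset_Icc K L)

lemma simplex_nonempty (K L : ℕ) [NeZero K] [NeZero L] : (simplex K L).Nonempty := by
  refine ⟨fun k l => if k = 0 ∧ l = 0 then 1 else 0, fun k l => by positivity, ?_⟩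
  simp [ite_and]

end Simplex

def infeasCost (M : ℕ) {K L : ℕ} (μ w : Fin K → Fin L → ℝ) (k : Fin K) : ℝ :=
  ∑ l ∈ univ.filter (fun l : Fin L => (l : ℕ) < M ∧ μ k l < 0), w k l * μ k l ^ 2

section ArmCost

variable {K L M : ℕ}

lemma gInfeas_eq_iInf_infeasCost (μ w : Fin K → Fin L → ℝ) :
    gInfeas M μ w = ⨅ k, infeasCost M μ w k :=
  rfl

lemma continuous_gInfeas [NeZero K] (μ : Fin K → Fin L → ℝ) : Continuous (gInfeas M μ) := by
  have h : gInfeas M μ = fun w => univ.inf' univ_nonempty (infeasCost M μ w) := by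
    funext w
    rw [gInfeas_eq_iInf_infeasCost, inf'_univ_eq_ciInf]
  rw [h]
  exact Continuous.finset_inf'_apply univ_nonempty fun k _ => by
    unfold infeasCost
    fun_prop

lemma wDist_update (w μ : Fin K → Fin L → ℝ) (k : Fin K) (r : Fin L → ℝ) :
    wDist w μ (Function.update μ k r) = ∑ l, w k l * (μ k l - r l) ^ 2 := by
  rw [wDist, sum_eq_single k]
  · simp
  · intro j _ hj
    simp [Function.update_of_ne hj]
  · simp

lemma wDist_nonneg {w : Fin K → Fin L → ℝ} (hw : ∀ k l, 0 ≤ w k l)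
    (μ lam : Fin K → Fin L → ℝ) :
    0 ≤ wDist w μ lam :=
  sum_nonneg fun k _ => sum_nonneg fun l _ => mul_nonneg (hw k l) (sq_nonneg _)

lemma infeasCost_le_sum_of_pos {μ lam : Fin K → Fin L → ℝ} {w : Fin K → Fin L → ℝ}
    (hw : ∀ k l, 0 ≤ w k l) {k : Fin K} (hpos : ∀ l : Fin L, (l : ℕ) < M → 0 < lam k l) :
    infeasCost M μ w k ≤ ∑ l, w k l * (μ k l - lam k l) ^ 2 := by
  refine (sum_le_sum fun l hl => ?_).trans
    (sum_le_sum_of_subset_of_nonneg (filter_subset _ _)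
      fun l _ _ => mul_nonneg (hw k l) (sq_nonneg _))
  obtain ⟨hlM, hneg⟩ := (mem_filter.mp hl).2
  have := hpos l hlM
  exact mul_le_mul_of_nonneg_left (by nlinarith) (hw k l)

lemma infeasCost_le_wDist_of_mem_Alt {q : Fin L → ℝ} {μ lam w : Fin K → Fin L → ℝ}
    (hw : ∀ k l, 0 ≤ w k l) (hlam : lam ∈ Alt M q (none : Option (Fin K))) :
    ∃ k, infeasCost M μ w k ≤ wDist w μ lam := by
  obtain ⟨_ | k, hbest, hne⟩ := hlam
  · exact absurd rfl hne
  refine ⟨k, (infeasCost_le_sum_of_pos hw hbest.1).trans ?_⟩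
  exact single_le_sum (f := fun j => ∑ l, w j l * (μ j l - lam j l) ^ 2)
    (fun j _ => sum_nonneg fun l _ => mul_nonneg (hw j l) (sq_nonneg _)) (mem_univ k)

lemma update_mem_Alt_none {q : Fin L → ℝ} {μ : Fin K → Fin L → ℝ}
    (hμ : isBestArm M q μ (none : Option (Fin K))) (k : Fin K) {r : Fin L → ℝ}
    (hr : ∀ l : Fin L, (l : ℕ) < M → 0 < r l) :
    Function.update μ k r ∈ Alt M q (none : Option (Fin K)) := by
  refine ⟨some k, ⟨by simpa using hr, fun j hj hfeas => ?_⟩, by simp⟩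
  obtain ⟨l, hlM, hneg⟩ := hμ j
  have := hfeas l hlM
  rw [Function.update_of_ne hj] at this
  linarith

lemma sInf_wDist_Alt_none_le_infeasCost {q : Fin L → ℝ} {μ : Fin K → Fin L → ℝ}
    (hμ : isBestArm M q μ (none : Option (Fin K))) {w : Fin K → Fin L → ℝ}
    (hw : ∀ k l, 0 ≤ w k l) (k : Fin K) :
    sInf (wDist w μ '' Alt M q (none : Option (Fin K))) ≤ infeasCost M μ w k := by
  set r : ℝ → Fin L → ℝ := fun ε l => if (l : ℕ) < M then max (μ k l) ε else μ k l
  set cost : ℝ → ℝ := fun ε => ∑ l, w k l * (μ k l - r ε l) ^ 2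
  have hcont : Continuous cost := by
    refine continuous_finsetSum _ fun l _ => ?_
    simp only [r]
    split_ifs <;> fun_prop
  have hzero : cost 0 = infeasCost M μ w k := by
    rw [infeasCost, sum_filter]
    refine sum_congr rfl fun l _ => ?_
    by_cases hl : (l : ℕ) < M
    · by_cases hneg : μ k l < 0
      · simp [r, hl, hneg, hneg.le]
      · simp [r, hl, hneg, not_lt.mp hneg]
    · simp [r, hl]
  have hbdd : BddBelow (wDist w μ '' Alt M q (none : Option (Fin K))) := by
    refine ⟨0, ?_⟩
    rintro _ ⟨lam, -, rfl⟩
    exact wDist_nonneg hw μ lam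
  have hle : ∀ ε ∈ Set.Ioi (0 : ℝ),
      sInf (wDist w μ '' Alt M q (none : Option (Fin K))) ≤ cost ε := by
    intro ε hε
    calc _ ≤ wDist w μ (Function.update μ k (r ε)) :=
          csInf_le hbdd (mem_image_of_mem _ (update_mem_Alt_none hμ k fun l hl => by
            simp [r, hl, Set.mem_Ioi.mp hε]))
      _ = cost ε := wDist_update w μ k (r ε)
  rw [← hzero]
  exact ge_of_tendsto (hcont.tendsto 0 |>.mono_left nhdsWithin_le_nhds)
    (eventually_nhdsWithin_of_forall hle)

lemma sInf_wDist_Alt_none_eq_gInfeas [NeZero K] {q : Fin L → ℝ} {μ : Fin K → Fin L → ℝ}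
    (hμ : isBestArm M q μ (none : Option (Fin K))) {w : Fin K → Fin L → ℝ}
    (hw : ∀ k l, 0 ≤ w k l) :
    sInf (wDist w μ '' Alt M q (none : Option (Fin K))) = gInfeas M μ w := by
  have hne : (wDist w μ '' Alt M q (none : Option (Fin K))).Nonempty :=
    ⟨_, mem_image_of_mem _ (update_mem_Alt_none hμ 0 (r := fun _ => 1) fun _ _ => one_pos)⟩
  refine le_antisymm (le_ciInf (sInf_wDist_Alt_none_le_infeasCost hμ hw)) (le_csInf hne ?_)
  rintro _ ⟨lam, hlam, rfl⟩
  obtain ⟨k, hk⟩ := infeasCost_le_wDist_of_mem_Alt hw hlam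
  exact (ciInf_le (finite_range _).bddBelow k).trans hk

end ArmCost

theorem supInf_eq_maxMin_of_noFeasible_general {K L M : ℕ} (hK : 2 ≤ K)
    (q : Fin L → ℝ) (μ : Fin K → Fin L → ℝ)
    (hμ : isBestArm M q μ (none : Option (Fin K))) :
    sSup ((fun w => sInf (wDist w μ '' Alt M q (none : Option (Fin K)))) '' simplex K L)
        = sSup ((fun w => gInfeas M μ w) '' simplex K L) ∧
      ∃ w ∈ simplex K L,
        sInf (wDist w μ '' Alt M q (none : Option (Fin K)))
          = sSup ((fun w => sInf (wDist w μ '' Alt M q (none : Option (Fin K)))) ''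
              simplex K L) := by
  have : NeZero K := ⟨by omega⟩
  obtain ⟨l, -⟩ := hμ 0
  have : NeZero L := NeZero.of_pos l.pos
  have himg : (fun w => sInf (wDist w μ '' Alt M q (none : Option (Fin K)))) '' simplex K L
      = gInfeas M μ '' simplex K L :=
    image_congr fun w hw => sInf_wDist_Alt_none_eq_gInfeas hμ hw.1
  obtain ⟨w₀, hw₀, hmax⟩ := (isCompact_simplex K L).exists_sSup_image_eq
    (simplex_nonempty K L) (continuous_gInfeas μ).continuousOn
  refine ⟨himg ▸ rfl, w₀, hw₀, ?_⟩
  rw [sInf_wDist_Alt_none_eq_gInfeas hμ hw₀.1, himg, hmax]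

/-- Theorem 2, case `k*(μ)=0`: the sup-inf characterization of `T*(μ)⁻¹` (without the
factor 1/2) equals the max-min of the infeasibility sums, and the supremum is attained. -/
theorem supInf_eq_maxMin_of_noFeasible {K L M : ℕ} (hK : 2 ≤ K) (hM : 1 ≤ M) (hML : M ≤ L)
    (q : Fin L → ℝ) (μ : Fin K → Fin L → ℝ)
    (hμ : isBestArm M q μ (none : Option (Fin K))) :
    sSup ((fun w => sInf (wDist w μ '' Alt M q (none : Option (Fin K)))) '' simplex K L)
        = sSup ((fun w => gInfeas M μ w) '' simplex K L) ∧
      ∃ w ∈ simplex K L,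
        sInf (wDist w μ '' Alt M q (none : Option (Fin K)))
          = sSup ((fun w => sInf (wDist w μ '' Alt M q (none : Option (Fin K)))) ''
              simplex K L) :=
  supInf_eq_maxMin_of_noFeasible_general hK q μ hμ
end
end

section
/- For every μ ∈ S, there exist w ∈ Σ_{K×L} and ε > 0 such that Σ_{k∈[K]} Σ_{l∈[L]} w_{k,l}(μ_{k,l} − λ_{k,l})² ≥ ε for every λ ∈ Alt(μ); that is, sup_{w ∈ Σ_{K×L}} inf_{λ ∈ Alt(μ)} Σ_{k,l} w_{k,l}(μ_{k,l} − λ_{k,l})² > 0. -/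
open Finset Set

noncomputable section

/-! The answer `k*(μ)` is unique, and locally constant on `S` because every condition defining it is
a strict inequality between continuous functions of the model (the feasible arms of `μ` keep their
quality gap, the infeasible ones keep a negative entry). Hence `Alt(μ)` stays at positive distance
`δ` from `μ` in the sup metric of `Fin K → Fin L → ℝ`. Under the uniform weight `1/(KL)`, every
model at sup-distance `≥ δ` from `μ` has some entry off by `δ`, hence weighted squared distance at
least `δ² / (KL)`. -/

open Filter Topology

section

variable {M K L : ℕ} {q : Fin L → ℝ} {μ : Fin K → Fin L → ℝ}

theorem isBestArm_unique {a b : Option (Fin K)}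
    (ha : isBestArm M q μ a) (hb : isBestArm M q μ b) : a = b := by
  have feasible_of_pos {k : Fin K} (h : ∀ l : Fin L, (l : ℕ) < M → 0 < μ k l) :
      feasible M μ k := fun l hl => (h l hl).le
  rcases a with _ | k <;> rcases b with _ | j
  · rfl
  · obtain ⟨l, hlM, hl⟩ := ha j
    exact absurd (hb.1 l hlM) hl.not_gt
  · obtain ⟨l, hlM, hl⟩ := hb k
    exact absurd (ha.1 l hlM) hl.not_gt
  · rw [Option.some_inj]
    by_contra! hkj
    exact (ha.2 j hkj.symm (feasible_of_pos hb.1)).asymm (hb.2 k hkj (feasible_of_pos ha.1))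

theorem continuous_quality (k : Fin K) : Continuous fun μ : Fin K → Fin L → ℝ => quality q μ k := by
  unfold quality
  fun_prop

theorem eventually_not_feasible {k : Fin K} (h : ¬ feasible M μ k) :
    ∀ᶠ lam in 𝓝 μ, ¬ feasible M lam k := by
  obtain ⟨l, hlM, hl⟩ : ∃ l : Fin L, (l : ℕ) < M ∧ μ k l < 0 := by
    simpa [feasible] using h
  filter_upwards [(continuous_apply_apply k l).continuousAt.eventually_lt continuousAt_const hl]
    with lam hlam hfeas
  exact (hfeas l hlM).not_gt hlam

theorem eventually_isBestArm {a : Option (Fin K)}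
    (h : isBestArm M q μ a) : ∀ᶠ lam in 𝓝 μ, isBestArm M q lam a := by
  rcases a with _ | ks
  · refine eventually_all.2 fun k => ?_
    obtain ⟨l, hlM, hl⟩ := h k
    filter_upwards [(continuous_apply_apply k l).continuousAt.eventually_lt continuousAt_const hl]
      with lam hlam using ⟨l, hlM, hlam⟩
  · obtain ⟨hpos, hbest⟩ := h
    have hpos' : ∀ᶠ lam in 𝓝 μ, ∀ l : Fin L, (l : ℕ) < M → 0 < lam ks l :=
      eventually_all.2 fun l => eventually_imp_distrib_left.2 fun hl =>
        continuousAt_const.eventually_lt (continuous_apply_apply ks l).continuousAt (hpos l hl)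
    have hbest' : ∀ᶠ lam in 𝓝 μ, ∀ j : Fin K, j ≠ ks → feasible M lam j →
        quality q lam j < quality q lam ks := by
      refine eventually_all.2 fun j => eventually_imp_distrib_left.2 fun hj => ?_
      by_cases hfeas : feasible M μ j
      · filter_upwards [(continuous_quality j).continuousAt.eventually_lt
          (continuous_quality ks).continuousAt (hbest j hj hfeas)] with lam hlam using fun _ => hlam
      · filter_upwards [eventually_not_feasible hfeas] with lam hlam hfeas' using absurd hfeas' hlam
    filter_upwards [hpos', hbest'] with lam h₁ h₂ using ⟨h₁, h₂⟩

theorem exists_pos_le_dist_of_mem_Alt {a : Option (Fin K)}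
    (h : isBestArm M q μ a) : ∃ δ > 0, ∀ lam ∈ Alt M q a, δ ≤ dist lam μ := by
  obtain ⟨δ, hδ, hball⟩ := Metric.eventually_nhds_iff.1 (eventually_isBestArm h)
  refine ⟨δ, hδ, fun lam ⟨b, hb, hba⟩ => not_lt.1 fun hlam => hba ?_⟩
  exact isBestArm_unique hb (hball hlam)

end

theorem mul_sq_sub_le_wDist {K L : ℕ} {w : Fin K → Fin L → ℝ} (hw : ∀ k l, 0 ≤ w k l)
    (μ lam : Fin K → Fin L → ℝ) (k : Fin K) (l : Fin L) :
    w k l * (μ k l - lam k l) ^ 2 ≤ wDist w μ lam := by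
  have hterm (k : Fin K) (l : Fin L) : 0 ≤ w k l * (μ k l - lam k l) ^ 2 :=
    mul_nonneg (hw k l) (sq_nonneg _)
  calc w k l * (μ k l - lam k l) ^ 2 ≤ ∑ l, w k l * (μ k l - lam k l) ^ 2 :=
        single_le_sum (fun l _ => hterm k l) (mem_univ l)
    _ ≤ wDist w μ lam :=
        single_le_sum (f := fun k => ∑ l, w k l * (μ k l - lam k l) ^ 2)
          (fun k _ => sum_nonneg fun l _ => hterm k l) (mem_univ k)

theorem mul_sq_le_wDist_const {K L : ℕ} {c δ : ℝ} (hc : 0 ≤ c) (hδ : 0 < δ)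
    {μ lam : Fin K → Fin L → ℝ} (h : δ ≤ dist lam μ) :
    c * δ ^ 2 ≤ wDist (fun _ _ => c) μ lam := by
  obtain ⟨k, l, hkl⟩ : ∃ k l, δ ≤ dist (lam k l) (μ k l) := by
    by_contra! hlt
    exact h.not_gt ((dist_pi_lt_iff hδ).2 fun k => (dist_pi_lt_iff hδ).2 (hlt k))
  rw [Real.dist_eq, abs_sub_comm] at hkl
  calc c * δ ^ 2 ≤ c * (μ k l - lam k l) ^ 2 := by
        rw [← sq_abs (μ k l - lam k l)]
        gcongr
    _ ≤ wDist (fun _ _ => c) μ lam := mul_sq_sub_le_wDist (fun _ _ => hc) μ lam k l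

theorem const_mem_simplex {K L : ℕ} (hK : 0 < K) (hL : 0 < L) :
    (fun _ _ => ((K : ℝ) * L)⁻¹) ∈ simplex K L := by
  refine ⟨fun _ _ => by positivity, ?_⟩
  simp only [sum_const, card_univ, Fintype.card_fin, nsmul_eq_mul]
  field_simp

/-- For every `μ ∈ S` there is a weight vector `w` in the simplex and `ε > 0` such that the
weighted squared distance from `μ` to every alternative model is at least `ε`; i.e. the
sup-inf in the lower bound is strictly positive. -/
theorem exists_weight_pos_inf {K L M : ℕ} (hK : 2 ≤ K) (hM : 1 ≤ M) (hML : M ≤ L)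
    (q : Fin L → ℝ) (μ : Fin K → Fin L → ℝ) (a : Option (Fin K))
    (hμ : isBestArm M q μ a) :
    ∃ w ∈ simplex K L, ∃ ε > (0 : ℝ), ∀ lam ∈ Alt M q a, ε ≤ wDist w μ lam := by
  have hK₀ : 0 < K := by omega
  have hL₀ : 0 < L := by omega
  obtain ⟨δ, hδ, hsep⟩ := exists_pos_le_dist_of_mem_Alt hμ
  exact ⟨_, const_mem_simplex hK₀ hL₀, ((K : ℝ) * L)⁻¹ * δ ^ 2, by positivity,
    fun lam hlam => mul_sq_le_wDist_const (by positivity) hδ (hsep lam hlam)⟩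
end
end

section
/- Let μ ∈ S satisfy k* = k*(μ) ∈ [K]. Then the function F_μ : Σ_{K×L} → ℝ defined by F_μ(w) = min(f^opt_μ(w), f^fea_μ(w)) is concave and continuous on the simplex Σ_{K×L}. -/
open Finset Set

noncomputable section

/-!
Both `fopt` and `ffea` are infima of linear functions of `w` with nonnegative coefficients.
On the orthant `w ≥ 0` such an infimum `F` is concave, monotone and nonnegative at `0`, and these
three properties already make it lower semicontinuous: for `s < 1` every `w ≥ 0` close to `w₀`
satisfies `w ≥ s • w₀` coordinatewise, whence `F w ≥ F (s • w₀) ≥ s * F w₀`. Upper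
semicontinuity holds for any infimum of continuous functions. Hence the class of such functions is
closed under infima, which handles the two nested infima in `fopt`.
-/

open Filter Topology

section Orthant

variable {ι κ : Type*}

structure OrthantConcave (f : (ι → κ → ℝ) → ℝ) : Prop where
  zero_nonneg : 0 ≤ f 0
  monotoneOn : MonotoneOn f (Set.Ici 0)
  concaveOn : ConcaveOn ℝ (Set.Ici 0) f
  continuousOn : ContinuousOn f (Set.Ici 0)

theorem orthantConcave_of_isLinearMap [Finite ι] [Finite κ] {f : (ι → κ → ℝ) → ℝ}
    (hlin : IsLinearMap ℝ f) (hmono : Monotone f) : OrthantConcave f where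
  zero_nonneg := hlin.map_zero.ge
  monotoneOn := hmono.monotoneOn _
  concaveOn := (IsLinearMap.mk' f hlin).concaveOn (convex_Ici 0)
  continuousOn := (IsLinearMap.mk' f hlin).continuous_of_finiteDimensional.continuousOn

theorem eventually_smul_le_nhdsWithin_Ici [Finite ι] [Finite κ] {w₀ : ι → κ → ℝ}
    (hw₀ : 0 ≤ w₀) {s : ℝ} (hs : s < 1) : ∀ᶠ w in 𝓝[Set.Ici 0] w₀, s • w₀ ≤ w := by
  refine eventually_all.2 fun k => eventually_all.2 fun l => ?_
  rcases (hw₀ k l).eq_or_lt with h | h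
  · filter_upwards [self_mem_nhdsWithin] with w hw
    simpa [← h] using hw k l
  · have hlt : s * w₀ k l < w₀ k l := by
      have h' : 0 < w₀ k l := h
      nlinarith
    have hcont : Continuous fun w : ι → κ → ℝ => w k l := by fun_prop
    exact (hcont.continuousWithinAt.eventually (lt_mem_nhds hlt)).mono fun w hw => hw.le

theorem lowerSemicontinuousOn_Ici_of_monotoneOn_of_concaveOn [Finite ι] [Finite κ]
    {f : (ι → κ → ℝ) → ℝ} (hmono : MonotoneOn f (Set.Ici 0)) (hconc : ConcaveOn ℝ (Set.Ici 0) f)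
    (h0 : 0 ≤ f 0) : LowerSemicontinuousOn f (Set.Ici 0) := by
  intro w₀ hw₀ a ha
  have hnear : ∀ᶠ s in 𝓝 (1 : ℝ), a < s * f w₀ :=
    ((continuous_id.mul continuous_const).tendsto' 1 (f w₀) (one_mul _)).eventually
      (lt_mem_nhds ha)
  obtain ⟨s, has, hs0, hs1⟩ :=
    ((hnear.filter_mono nhdsWithin_le_nhds).and (Ioo_mem_nhdsLT zero_lt_one)).exists
  have hsw₀ : s • w₀ ∈ Set.Ici 0 := Set.mem_Ici.2 (smul_nonneg hs0.le hw₀)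
  have hscale : s * f w₀ ≤ f (s • w₀) := by
    have := hconc.2 hw₀ Set.self_mem_Ici hs0.le (sub_nonneg.2 hs1.le) (add_sub_cancel s 1)
    simp only [smul_zero, add_zero, smul_eq_mul] at this
    nlinarith [mul_nonneg (sub_nonneg.2 hs1.le) h0]
  filter_upwards [eventually_smul_le_nhdsWithin_Ici hw₀ hs1, self_mem_nhdsWithin] with w hle hw
  exact has.trans_le (hscale.trans (hmono hsw₀ hw hle))

theorem OrthantConcave.iInf [Finite ι] [Finite κ] {ι' : Sort*} [Nonempty ι']
    {f : ι' → (ι → κ → ℝ) → ℝ} (hf : ∀ i, OrthantConcave (f i)) :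
    OrthantConcave fun w => ⨅ i, f i w := by
  have hbdd : ∀ w ∈ Set.Ici (0 : ι → κ → ℝ), BddBelow (range fun i => f i w) := fun w hw =>
    ⟨0, forall_mem_range.2 fun i =>
      (hf i).zero_nonneg.trans ((hf i).monotoneOn Set.self_mem_Ici hw hw)⟩
  have zero_nonneg : 0 ≤ ⨅ i, f i 0 := le_ciInf fun i => (hf i).zero_nonneg
  have monotoneOn : MonotoneOn (fun w => ⨅ i, f i w) (Set.Ici 0) := fun x hx y hy hxy =>
    ciInf_mono (hbdd x hx) fun i => (hf i).monotoneOn hx hy hxy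
  have concaveOn : ConcaveOn ℝ (Set.Ici 0) fun w => ⨅ i, f i w := by
    refine ⟨convex_Ici 0, fun x hx y hy a b ha hb hab => le_ciInf fun i => ?_⟩
    calc a • (⨅ i, f i x) + b • (⨅ i, f i y) ≤ a • f i x + b • f i y := by
          gcongr
          exacts [ciInf_le (hbdd x hx) i, ciInf_le (hbdd y hy) i]
      _ ≤ f i (a • x + b • y) := (hf i).concaveOn.2 hx hy ha hb hab
  refine ⟨zero_nonneg, monotoneOn, concaveOn, ?_⟩
  exact continuousOn_iff_lower_upperSemicontinuousOn.2
    ⟨lowerSemicontinuousOn_Ici_of_monotoneOn_of_concaveOn monotoneOn concaveOn zero_nonneg,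
      upperSemicontinuousOn_ciInf hbdd fun i => (hf i).continuousOn.upperSemicontinuousOn⟩

end Orthant

theorem simplex_subset_Ici (K L : ℕ) : simplex K L ⊆ Set.Ici 0 := fun _ hw => hw.1

theorem convex_simplex (K L : ℕ) : Convex ℝ (simplex K L) :=
  (convex_Ici 0).inter <| convex_hyperplane (f := fun w : Fin K → Fin L → ℝ => ∑ k, ∑ l, w k l)
    ⟨fun x y => by simp [Finset.sum_add_distrib], fun c x => by simp [Finset.mul_sum]⟩ 1

section Bandit

variable {K L : ℕ}

theorem fopt_eq_iInf (M : ℕ) (q : Fin L → ℝ) (μ : Fin K → Fin L → ℝ) (ks : Fin K) :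
    fopt M q μ ks = fun w => ⨅ k : {k : Fin K // k ≠ ks},
      ⨅ lam : {lam : Fin K → Fin L → ℝ // quality q lam ks ≤ quality q lam k.1 ∧
        ∀ l : Fin L, (l : ℕ) < M → 0 ≤ lam k.1 l},
      (∑ l, w ks l * (μ ks l - lam.1 ks l) ^ 2) + ∑ l, w k.1 l * (μ k.1 l - lam.1 k.1 l) ^ 2 := by
  funext w
  refine iInf_congr fun k => congrArg sInf (Set.ext fun v => ?_)
  simp [eq_comm, and_assoc]

theorem orthantConcave_fopt (hK : 2 ≤ K) (M : ℕ) (q : Fin L → ℝ) (μ : Fin K → Fin L → ℝ)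
    (ks : Fin K) : OrthantConcave (fopt M q μ ks) := by
  obtain ⟨k, hk⟩ := Fintype.exists_ne_of_one_lt_card (by rw [Fintype.card_fin]; omega) ks
  have : Nonempty {k : Fin K // k ≠ ks} := ⟨⟨k, hk⟩⟩
  rw [fopt_eq_iInf]
  refine .iInf fun k => ?_
  have : Nonempty {lam : Fin K → Fin L → ℝ // quality q lam ks ≤ quality q lam k.1 ∧
      ∀ l : Fin L, (l : ℕ) < M → 0 ≤ lam k.1 l} := ⟨⟨0, by simp [quality], fun _ _ => le_rfl⟩⟩
  refine .iInf fun lam =>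
    orthantConcave_of_isLinearMap ⟨fun x y => ?_, fun c x => ?_⟩ fun x y h => ?_
  · simp only [Pi.add_apply, add_mul, Finset.sum_add_distrib]; ring
  · simp only [Pi.smul_apply, smul_eq_mul, Finset.mul_sum, mul_add, mul_assoc]
  · gcongr with l _ l _ <;> [exact h ks l; exact h k.1 l]

theorem orthantConcave_ffea {M : ℕ} (hM : 1 ≤ M) (hML : M ≤ L) (μ : Fin K → Fin L → ℝ)
    (ks : Fin K) : OrthantConcave (ffea M μ ks) := by
  have : Nonempty {l : Fin L // (l : ℕ) < M} := ⟨⟨⟨0, by omega⟩, hM⟩⟩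
  refine .iInf fun l =>
    orthantConcave_of_isLinearMap ⟨fun x y => ?_, fun c x => ?_⟩ fun x y h => ?_
  · simp only [Pi.add_apply, add_mul]
  · simp only [Pi.smul_apply, smul_eq_mul, mul_assoc]
  · exact mul_le_mul_of_nonneg_right (h ks l) (sq_nonneg _)

end Bandit

theorem concaveOn_and_continuousOn_F_general {K L M : ℕ} (hK : 2 ≤ K) (hM : 1 ≤ M) (hML : M ≤ L)
    (q : Fin L → ℝ) (μ : Fin K → Fin L → ℝ) (ks : Fin K) :
    ConcaveOn ℝ (simplex K L) (fun w => min (fopt M q μ ks w) (ffea M μ ks w)) ∧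
      ContinuousOn (fun w => min (fopt M q μ ks w) (ffea M μ ks w)) (simplex K L) := by
  have hopt := orthantConcave_fopt hK M q μ ks
  have hfea := orthantConcave_ffea hM hML μ ks
  exact ⟨(hopt.concaveOn.inf hfea.concaveOn).subset (simplex_subset_Ici K L) (convex_simplex K L),
    (hopt.continuousOn.inf hfea.continuousOn).mono (simplex_subset_Ici K L)⟩

/-- For `μ ∈ S` with `k*(μ) = ks ∈ [K]`, the function
`F_μ(w) = min(f^opt_μ(w), f^fea_μ(w))` is concave and continuous on the simplex. -/
theorem concaveOn_and_continuousOn_F {K L M : ℕ} (hK : 2 ≤ K) (hM : 1 ≤ M) (hML : M ≤ L)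
    (q : Fin L → ℝ) (μ : Fin K → Fin L → ℝ) (ks : Fin K)
    (hμ : isBestArm M q μ (some ks)) :
    ConcaveOn ℝ (simplex K L) (fun w => min (fopt M q μ ks w) (ffea M μ ks w)) ∧
      ContinuousOn (fun w => min (fopt M q μ ks w) (ffea M μ ks w)) (simplex K L) :=
  concaveOn_and_continuousOn_F_general hK hM hML q μ ks
end
end

section
/- Let μ ∈ ℝ^{K×L} be such that every arm k ∈ [K] has at least one l ∈ [M] with μ_{k,l} < 0. For each k, let m_k = max{μ_{k,l}² : l ∈ [M], μ_{k,l} < 0}, attained at some index l(k). Then max_{w ∈ Σ_{K×L}} min_{k∈[K]} Σ_{l∈[M], μ_{k,l}<0} w_{k,l} μ_{k,l}² = (Σ_{k=1}^K m_k^{-1})^{-1}, and this maximum is attained by the weight vector w* with w*_{k,l(k)} = m_k^{-1}(Σ_{j=1}^K m_j^{-1})^{-1} for each k ∈ [K] and w*_{k,l} = 0 for all other entries. -/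
/-! Arm `k`'s violated-constraint sum is at most `m_k` times the total weight of arm `k`.
Hence if every such sum is at least `c`, the weights add up to at least `c Σ_k m_k⁻¹`, which
forces `c ≤ (Σ_k m_k⁻¹)⁻¹`; the weights `w*` make all `K` sums equal to this bound. -/

open Finset Set

noncomputable section

theorem le_inv_sum_inv_of_forall_le_mul {ι : Type*} [Fintype ι] [Nonempty ι] {m s : ι → ℝ}
    {c : ℝ} (hm : ∀ i, 0 < m i) (hs : ∑ i, s i = 1) (hc : ∀ i, c ≤ m i * s i) :
    c ≤ (∑ i, (m i)⁻¹)⁻¹ := by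
  have hS : 0 < ∑ i, (m i)⁻¹ := sum_pos (fun i _ => inv_pos.2 (hm i)) univ_nonempty
  rw [← one_div, le_div_iff₀ hS, mul_sum, ← hs]
  exact sum_le_sum fun i _ => (mul_inv_le_iff₀ (hm i)).2 (by linarith [hc i, mul_comm (m i) (s i)])

theorem sum_inv_mul_inv_sum_inv {ι : Type*} [Fintype ι] {m : ι → ℝ}
    (hS : ∑ i, (m i)⁻¹ ≠ 0) : ∑ i, (m i)⁻¹ * (∑ j, (m j)⁻¹)⁻¹ = 1 := by
  rw [← sum_mul, mul_inv_cancel₀ hS]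

section Infeasibility

variable {K L : ℕ} (M : ℕ) (μ : Fin K → Fin L → ℝ)

def infeasSum (w : Fin K → Fin L → ℝ) (k : Fin K) : ℝ :=
  ∑ l ∈ univ.filter (fun l : Fin L => (l : ℕ) < M ∧ μ k l < 0), w k l * (μ k l) ^ 2

theorem gInfeas_eq_iInf_infeasSum (w : Fin K → Fin L → ℝ) :
    gInfeas M μ w = ⨅ k, infeasSum M μ w k := rfl

theorem gInfeas_le_infeasSum (w : Fin K → Fin L → ℝ) (k : Fin K) :
    gInfeas M μ w ≤ infeasSum M μ w k :=
  ciInf_le (Finite.bddBelow_range _) k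

theorem gInfeas_eq_of_forall_infeasSum_eq [Nonempty (Fin K)] {w : Fin K → Fin L → ℝ} {c : ℝ}
    (h : ∀ k, infeasSum M μ w k = c) : gInfeas M μ w = c := by
  simp only [gInfeas_eq_iInf_infeasSum, h, ciInf_const]

variable {M μ}

theorem infeasSum_le_mul_sum {w : Fin K → Fin L → ℝ} {k : Fin K} {m : ℝ} (hw : ∀ l, 0 ≤ w k l)
    (hm : 0 ≤ m) (hmax : ∀ l : Fin L, (l : ℕ) < M → μ k l < 0 → (μ k l) ^ 2 ≤ m) :
    infeasSum M μ w k ≤ m * ∑ l, w k l := by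
  rw [mul_sum]
  calc infeasSum M μ w k
      ≤ ∑ l ∈ univ.filter (fun l : Fin L => (l : ℕ) < M ∧ μ k l < 0), m * w k l := by
        refine sum_le_sum fun l hl => ?_
        rw [mem_filter] at hl
        rw [mul_comm m]
        exact mul_le_mul_of_nonneg_left (hmax l hl.2.1 hl.2.2) (hw l)
    _ ≤ ∑ l, m * w k l :=
        sum_le_sum_of_subset_of_nonneg (filter_subset _ _) fun l _ _ => mul_nonneg hm (hw l)

variable (lk : Fin K → Fin L)

def rowSingle (v : Fin K → ℝ) : Fin K → Fin L → ℝ :=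
  fun k l => if l = lk k then v k else 0

theorem rowSingle_mem_simplex {v : Fin K → ℝ} (hv : ∀ k, 0 ≤ v k) (hsum : ∑ k, v k = 1) :
    rowSingle lk v ∈ simplex K L := by
  refine ⟨fun k l => ?_, ?_⟩
  · unfold rowSingle
    split_ifs
    exacts [hv k, le_rfl]
  · simpa [rowSingle, sum_ite_eq'] using hsum

theorem infeasSum_rowSingle (v : Fin K → ℝ) {k : Fin K}
    (hlk : (lk k : ℕ) < M ∧ μ k (lk k) < 0) :
    infeasSum M μ (rowSingle lk v) k = v k * (μ k (lk k)) ^ 2 := by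
  rw [infeasSum, sum_eq_single_of_mem (lk k) (by simpa using hlk)
    fun l _ hne => by rw [rowSingle, if_neg hne, zero_mul]]
  simp [rowSingle]

end Infeasibility

theorem maxMin_gInfeas_explicit_general {K L M : ℕ} (hK : 2 ≤ K)
    (μ : Fin K → Fin L → ℝ)
    (lk : Fin K → Fin L)
    (hlk : ∀ k, (lk k : ℕ) < M ∧ μ k (lk k) < 0)
    (hlkmax : ∀ k, ∀ l : Fin L, (l : ℕ) < M → μ k l < 0 → (μ k l) ^ 2 ≤ (μ k (lk k)) ^ 2)
    (m : Fin K → ℝ) (hm : ∀ k, m k = (μ k (lk k)) ^ 2)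
    (wstar : Fin K → Fin L → ℝ)
    (hwstar : ∀ k l, wstar k l
      = if l = lk k then (m k)⁻¹ * (∑ j, (m j)⁻¹)⁻¹ else 0) :
    wstar ∈ simplex K L ∧
      gInfeas M μ wstar = (∑ j, (m j)⁻¹)⁻¹ ∧
      ∀ w ∈ simplex K L, gInfeas M μ w ≤ (∑ j, (m j)⁻¹)⁻¹ := by
  have : Nonempty (Fin K) := ⟨⟨0, by omega⟩⟩
  have hm0 : ∀ k, 0 < m k := fun k => hm k ▸ sq_pos_of_neg (hlk k).2
  have hS : 0 < ∑ j, (m j)⁻¹ := sum_pos (fun j _ => inv_pos.2 (hm0 j)) univ_nonempty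
  obtain rfl : wstar = rowSingle lk fun k => (m k)⁻¹ * (∑ j, (m j)⁻¹)⁻¹ := funext₂ hwstar
  refine ⟨rowSingle_mem_simplex lk
    (fun k => mul_nonneg (inv_nonneg.2 (hm0 k).le) (inv_nonneg.2 hS.le))
    (sum_inv_mul_inv_sum_inv hS.ne'),
    gInfeas_eq_of_forall_infeasSum_eq M μ fun k => ?_, fun w ⟨hw, hsum⟩ => ?_⟩
  · rw [infeasSum_rowSingle lk _ (hlk k), ← hm k, mul_comm, ← mul_assoc,
      mul_inv_cancel₀ (hm0 k).ne', one_mul]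
  · exact le_inv_sum_inv_of_forall_le_mul hm0 hsum fun k =>
      (gInfeas_le_infeasSum M μ w k).trans <|
        infeasSum_le_mul_sum (hw k) (hm0 k).le fun l => hm k ▸ hlkmax k l

/-- Explicit solution of the max-min problem when every arm violates some constraint:
with `m k = max{μ_{k,l}² : l ∈ [M], μ_{k,l} < 0}` attained at `l(k)`, the optimal value is
`(Σ_k m_k⁻¹)⁻¹`, attained at the weight vector `w*` supported on the entries `(k, l(k))`. -/
theorem maxMin_gInfeas_explicit {K L M : ℕ} (hK : 2 ≤ K) (hM : 1 ≤ M) (hML : M ≤ L)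
    (μ : Fin K → Fin L → ℝ)
    (hviol : ∀ k : Fin K, ∃ l : Fin L, (l : ℕ) < M ∧ μ k l < 0)
    (lk : Fin K → Fin L)
    (hlk : ∀ k, (lk k : ℕ) < M ∧ μ k (lk k) < 0)
    (hlkmax : ∀ k, ∀ l : Fin L, (l : ℕ) < M → μ k l < 0 → (μ k l) ^ 2 ≤ (μ k (lk k)) ^ 2)
    (m : Fin K → ℝ) (hm : ∀ k, m k = (μ k (lk k)) ^ 2)
    (wstar : Fin K → Fin L → ℝ)
    (hwstar : ∀ k l, wstar k l
      = if l = lk k then (m k)⁻¹ * (∑ j, (m j)⁻¹)⁻¹ else 0) :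
    wstar ∈ simplex K L ∧
      gInfeas M μ wstar = (∑ j, (m j)⁻¹)⁻¹ ∧
      ∀ w ∈ simplex K L, gInfeas M μ w ≤ (∑ j, (m j)⁻¹)⁻¹ :=
  maxMin_gInfeas_explicit_general hK μ lk hlk hlkmax m hm wstar hwstar
end
end

section
/- Let μ ∈ S satisfy k* = k*(μ) ∈ [K], and let w ∈ Σ_{K×L} have all entries strictly positive. Then min(f^opt_μ(w), f^fea_μ(w)) > 0. -/
open Finset Set

noncomputable section

/-!
Both quantities are finite minima, so it suffices to bound each term away from zero. For
`f^fea` the terms are `w_{k*,l} μ_{k*,l}² > 0`, since `k*` satisfies its constraints strictly.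
For `f^opt` and a competitor `k`: if `k` is infeasible under `μ`, some `μ_{k,l} < 0 ≤ λ_{k,l}`, so
the cost is at least `w_{k,l} μ_{k,l}²`. If `k` is feasible, the quality gap `δ = μ_{k*} - μ_k > 0`
must be closed by `λ`, and weighted Cauchy–Schwarz gives `δ² ≤ C · cost` with
`C = Σ_l q_l² / w_{k*,l} + Σ_l q_l² / w_{k,l}`.
-/

theorem lt_ciInf_of_finite {α ι : Type*} [ConditionallyCompleteLinearOrder α] [Finite ι]
    [Nonempty ι] {f : ι → α} {a : α} (h : ∀ i, a < f i) : a < ⨅ i, f i := by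
  obtain ⟨i, hi⟩ := exists_eq_ciInf_of_finite (f := f)
  exact hi ▸ h i

theorem sq_sum_mul_le_sum_sq_div_mul_sum_mul_sq {ι : Type*} (s : Finset ι) (c t w : ι → ℝ)
    (hw : ∀ i ∈ s, 0 < w i) :
    (∑ i ∈ s, c i * t i) ^ 2 ≤ (∑ i ∈ s, c i ^ 2 / w i) * ∑ i ∈ s, w i * t i ^ 2 := by
  refine sum_sq_le_sum_mul_sum_of_sq_le_mul s (fun i hi => by have := hw i hi; positivity)
    (fun i hi => by have := hw i hi; positivity) fun i hi => le_of_eq ?_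
  field_simp [(hw i hi).ne']

theorem sq_sum_mul_sub_sum_mul_le {ι : Type*} [Fintype ι] (c a b u v : ι → ℝ)
    (hu : ∀ i, 0 < u i) (hv : ∀ i, 0 < v i) :
    (∑ i, c i * a i - ∑ i, c i * b i) ^ 2 ≤
      (∑ i, c i ^ 2 / u i + ∑ i, c i ^ 2 / v i) *
        (∑ i, u i * a i ^ 2 + ∑ i, v i * b i ^ 2) := by
  have := sq_sum_mul_le_sum_sq_div_mul_sum_mul_sq univ (Sum.elim c c) (Sum.elim a (-b))
    (Sum.elim u v) (by rintro (i | i) -; exacts [hu i, hv i])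
  simpa [Fintype.sum_sum_type, sub_eq_add_neg, neg_sq] using this

theorem mul_sq_le_sum_mul_sq_sub {ι : Type*} [Fintype ι] {w x y : ι → ℝ} (hw : ∀ i, 0 ≤ w i)
    {i : ι} (hx : x i < 0) (hy : 0 ≤ y i) :
    w i * x i ^ 2 ≤ ∑ j, w j * (x j - y j) ^ 2 :=
  calc w i * x i ^ 2 ≤ w i * (x i - y i) ^ 2 :=
        mul_le_mul_of_nonneg_left (by nlinarith) (hw i)
    _ ≤ ∑ j, w j * (x j - y j) ^ 2 :=
        single_le_sum (f := fun j => w j * (x j - y j) ^ 2)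
          (fun j _ => mul_nonneg (hw j) (sq_nonneg _)) (mem_univ i)

theorem sum_mul_sq_sub_nonneg {ι : Type*} [Fintype ι] {w : ι → ℝ} (hw : ∀ i, 0 ≤ w i)
    (x y : ι → ℝ) : 0 ≤ ∑ i, w i * (x i - y i) ^ 2 :=
  sum_nonneg fun i _ => mul_nonneg (hw i) (sq_nonneg _)

section Competitor

variable {K L M : ℕ} {q : Fin L → ℝ} {μ w lam : Fin K → Fin L → ℝ} {ks k : Fin K}

theorem quality_gap_sq_le (hwpos : ∀ k l, 0 < w k l)
    (hgap : quality q μ k ≤ quality q μ ks) (hlam : quality q lam ks ≤ quality q lam k) :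
    (quality q μ ks - quality q μ k) ^ 2 ≤
      (∑ l, q l ^ 2 / w ks l + ∑ l, q l ^ 2 / w k l) *
        (∑ l, w ks l * (μ ks l - lam ks l) ^ 2 + ∑ l, w k l * (μ k l - lam k l) ^ 2) := by
  refine le_trans ?_ (sq_sum_mul_sub_sum_mul_le q _ _ _ _ (hwpos ks) (hwpos k))
  refine pow_le_pow_left₀ (sub_nonneg.mpr hgap) ?_ 2
  simp only [quality, mul_sub, sum_sub_distrib] at hlam ⊢
  linarith

theorem exists_pos_le_competitor_cost (hμ : isBestArm M q μ (some ks))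
    (hwpos : ∀ k l, 0 < w k l) (hk : k ≠ ks) :
    ∃ ε > 0, ∀ lam : Fin K → Fin L → ℝ, quality q lam ks ≤ quality q lam k →
      (∀ l : Fin L, (l : ℕ) < M → 0 ≤ lam k l) →
      ε ≤ (∑ l, w ks l * (μ ks l - lam ks l) ^ 2) + ∑ l, w k l * (μ k l - lam k l) ^ 2 := by
  by_cases hfeas : feasible M μ k
  · have hgap := hμ.2 k hk hfeas
    set C := ∑ l, q l ^ 2 / w ks l + ∑ l, q l ^ 2 / w k l
    have hC : 0 ≤ C := add_nonneg
      (sum_nonneg fun l _ => div_nonneg (sq_nonneg _) (hwpos ks l).le)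
      (sum_nonneg fun l _ => div_nonneg (sq_nonneg _) (hwpos k l).le)
    -- dividing by `C + 1` instead of `C` spares proving `C ≠ 0`, as the cost is nonnegative
    refine ⟨(quality q μ ks - quality q μ k) ^ 2 / (C + 1),
      div_pos (pow_pos (sub_pos.mpr hgap) 2) (by linarith), fun lam hlam _ => ?_⟩
    have hcost : 0 ≤ (∑ l, w ks l * (μ ks l - lam ks l) ^ 2) +
        ∑ l, w k l * (μ k l - lam k l) ^ 2 :=
      add_nonneg (sum_mul_sq_sub_nonneg (fun l => (hwpos ks l).le) _ _)
        (sum_mul_sq_sub_nonneg (fun l => (hwpos k l).le) _ _)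
    rw [div_le_iff₀ (by linarith)]
    linarith [quality_gap_sq_le hwpos hgap.le hlam]
  · obtain ⟨l, hlM, hneg⟩ : ∃ l : Fin L, (l : ℕ) < M ∧ μ k l < 0 := by
      simpa [feasible] using hfeas
    refine ⟨w k l * μ k l ^ 2, mul_pos (hwpos k l) (sq_pos_of_neg hneg), ?_⟩
    intro lam _ hlam
    have := mul_sq_le_sum_mul_sq_sub (fun l => (hwpos k l).le) hneg (hlam l hlM)
    linarith [sum_mul_sq_sub_nonneg (fun l => (hwpos ks l).le) (μ ks) (lam ks)]

end Competitor

theorem F_pos_of_pos_weights_general {K L M : ℕ} (hK : 2 ≤ K) (hM : 1 ≤ M) (hML : M ≤ L)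
    (q : Fin L → ℝ) (μ : Fin K → Fin L → ℝ) (ks : Fin K)
    (hμ : isBestArm M q μ (some ks))
    (w : Fin K → Fin L → ℝ) (hwpos : ∀ k l, 0 < w k l) :
    0 < min (fopt M q μ ks w) (ffea M μ ks w) := by
  have : Nontrivial (Fin K) := Fin.nontrivial_iff_two_le.mpr hK
  have : Nonempty {k : Fin K // k ≠ ks} := nonempty_subtype.mpr (exists_ne ks)
  have : Nonempty {l : Fin L // (l : ℕ) < M} := ⟨⟨⟨0, by omega⟩, hM⟩⟩
  refine lt_min (lt_ciInf_of_finite fun ⟨k, hk⟩ => ?_)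
    (lt_ciInf_of_finite fun ⟨l, hl⟩ => mul_pos (hwpos ks l) (pow_pos (hμ.1 l hl) 2))
  obtain ⟨ε, hε, hbound⟩ := exists_pos_le_competitor_cost hμ hwpos hk
  refine hε.trans_le (le_csInf ⟨_, 0, by simp [quality], fun _ _ => le_rfl, rfl⟩ ?_)
  rintro v ⟨lam, hlam, hfeas, rfl⟩
  exact hbound lam hlam hfeas

/-- For `μ ∈ S` with `k*(μ) = ks ∈ [K]` and a weight vector in the simplex with all entries
strictly positive, `min(f^opt_μ(w), f^fea_μ(w)) > 0`. -/
theorem F_pos_of_pos_weights {K L M : ℕ} (hK : 2 ≤ K) (hM : 1 ≤ M) (hML : M ≤ L)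
    (q : Fin L → ℝ) (μ : Fin K → Fin L → ℝ) (ks : Fin K)
    (hμ : isBestArm M q μ (some ks))
    (w : Fin K → Fin L → ℝ) (hw : w ∈ simplex K L) (hwpos : ∀ k l, 0 < w k l) :
    0 < min (fopt M q μ ks w) (ffea M μ ks w) :=
  F_pos_of_pos_weights_general hK hM hML q μ ks hμ w hwpos
end
end
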